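/- arXiv:1604.08057 — 3 statements merged into one kernel-verified Lean document; each statement's English description precedes it below -/
import Mathlib

section
/- Let A(t) be a differentiable family of n×n complex matrices with A(t)·v(t) = λ_j(t)·v(t) for differentiable v(t), λ_j(t). Let ℓ be a left eigenvector of A(0) for a different eigenvalue λ_i(0) ≠ λ_j(0), so that ⟨ℓ, v(0)⟩ = 0 by biorthogonality. Then (λ_j(0) − λ_i(0))·⟨ℓ, v'(0)⟩ = ℓ · A'(0) · v(0), i.e. ⟨ℓ, v'(0)⟩ = (ℓ · A'(0) · v(0)) / (λ_j(0) − λ_i(0)). -/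
open Matrix

theorem eigenvector_derivative_component (n : ℕ)
    (A : ℝ → Matrix (Fin n) (Fin n) ℂ)
    (v : ℝ → Fin n → ℂ) (lamj : ℝ → ℂ)
    (hA : ∀ i j, Differentiable ℝ (fun t => A t i j))
    (hv : ∀ i, Differentiable ℝ (fun t => v t i))
    (hlam : Differentiable ℝ lamj)
    (heig : ∀ t, (A t).mulVec (v t) = lamj t • v t)
    (ℓ : Fin n → ℂ) (lami : ℂ) (hne : lami ≠ lamj 0)
    (hl : Matrix.vecMul ℓ (A 0) = lami • ℓ) :
    (lamj 0 - lami) * dotProduct ℓ (fun i => deriv (fun t => v t i) 0) =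
      dotProduct ℓ
        ((Matrix.of fun i j => deriv (fun t => A t i j) 0).mulVec (v 0)) := by
  classical
  set v' : Fin n → ℂ := fun k => deriv (fun t => v t k) 0 with hv'def
  -- biorthogonality: ℓ ⬝ᵥ v 0 = 0
  have hv0 : ℓ ⬝ᵥ v 0 = 0 := by
    have h1 : ℓ ⬝ᵥ (A 0).mulVec (v 0) = lami * (ℓ ⬝ᵥ v 0) := by
      rw [Matrix.dotProduct_mulVec, hl, smul_dotProduct, smul_eq_mul]
    have h2 : ℓ ⬝ᵥ (A 0).mulVec (v 0) = lamj 0 * (ℓ ⬝ᵥ v 0) := by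
      rw [heig 0, dotProduct_smul, smul_eq_mul]
    have h3 : (lami - lamj 0) * (ℓ ⬝ᵥ v 0) = 0 := by
      rw [sub_mul, ← h1, ← h2, sub_self]
    rcases mul_eq_zero.mp h3 with h | h
    · exact absurd (sub_eq_zero.mp h) hne
    · exact h
  -- derivative of eigen-equation componentwise
  have key : ∀ i, (∑ k, (deriv (fun t => A t i k) 0 * v 0 k + A 0 i k * v' k)) =
      deriv lamj 0 * v 0 i + lamj 0 * v' i := by
    intro i
    have h1 : HasDerivAt (fun t => ∑ k, A t i k * v t k)
        (∑ k, (deriv (fun t => A t i k) 0 * v 0 k + A 0 i k * v' k)) 0 :=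
      HasDerivAt.fun_sum fun k _ =>
        (((hA i k) 0).hasDerivAt.mul ((hv k) 0).hasDerivAt)
    have h2 : HasDerivAt (fun t => lamj t * v t i)
        (deriv lamj 0 * v 0 i + lamj 0 * v' i) 0 :=
      (hlam 0).hasDerivAt.mul ((hv i) 0).hasDerivAt
    have heq : (fun t => ∑ k, A t i k * v t k) = fun t => lamj t * v t i := by
      funext t
      have := congrFun (heig t) i
      simpa [Matrix.mulVec, dotProduct] using this
    rw [heq] at h1
    exact h1.unique h2
  -- dot the key identity with ℓ
  have hsum : (∑ i, ℓ i * (∑ k, (deriv (fun t => A t i k) 0 * v 0 k + A 0 i k * v' k))) =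
      ∑ i, ℓ i * (deriv lamj 0 * v 0 i + lamj 0 * v' i) := by
    exact Finset.sum_congr rfl fun i _ => by rw [key i]
  have hLHS : (∑ i, ℓ i * (∑ k, (deriv (fun t => A t i k) 0 * v 0 k + A 0 i k * v' k))) =
      ℓ ⬝ᵥ ((Matrix.of fun i j => deriv (fun t => A t i j) 0).mulVec (v 0)) +
        lami * (ℓ ⬝ᵥ v') := by
    have hAv : ℓ ⬝ᵥ (A 0).mulVec v' = lami * (ℓ ⬝ᵥ v') := by
      rw [Matrix.dotProduct_mulVec, hl, smul_dotProduct, smul_eq_mul]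
    rw [← hAv]
    simp only [dotProduct, Matrix.mulVec, Matrix.of_apply, Finset.mul_sum,
      mul_add, Finset.sum_add_distrib]
  have hRHS : (∑ i, ℓ i * (deriv lamj 0 * v 0 i + lamj 0 * v' i)) =
      lamj 0 * (ℓ ⬝ᵥ v') := by
    have : (∑ i, ℓ i * (deriv lamj 0 * v 0 i + lamj 0 * v' i)) =
        deriv lamj 0 * (ℓ ⬝ᵥ v 0) + lamj 0 * (ℓ ⬝ᵥ v') := by
      simp only [dotProduct, Finset.mul_sum, mul_add, Finset.sum_add_distrib]
      congr 1 <;> exact Finset.sum_congr rfl fun i _ => by ring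
    rw [this, hv0, mul_zero, zero_add]
  have hfinal := hsum
  rw [hLHS, hRHS] at hfinal
  have : (lamj 0 - lami) * (ℓ ⬝ᵥ v') =
      ℓ ⬝ᵥ ((Matrix.of fun i j => deriv (fun t => A t i j) 0).mulVec (v 0)) := by
    linear_combination -hfinal
  simpa [hv'def] using this
end

section
/- Let X be the 2n×2n matrix whose columns come in pairs: column 2j−1 is (R_j, 0) and column 2j is (1/λ'_j)·(R'_j, R_j), and let Y be the 2n×2n matrix whose rows come in pairs: row 2j−1 is (L_j, L'_j) and row 2j is λ'_j·(0, L_j). Assume biorthonormality ⟨L_i, R_j⟩ = δ_{ij}, the derivative conditions ⟨L_i, R'_j⟩ + ⟨L'_i, R_j⟩ = 0 and ⟨L_j, R'_j⟩ = 0, and λ'_j ≠ 0 for all j. Then Y·X = I, i.e. the matrices (13)–(14) of the paper are mutually inverse. -/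
open Matrix

theorem jordan_transform_inverse (n : ℕ)
    (R R' L L' : Fin n → Fin n → ℂ) (lam' : Fin n → ℂ)
    (hlam' : ∀ j, lam' j ≠ 0)
    (hbi : ∀ i j, dotProduct (L i) (R j) = if i = j then 1 else 0)
    (hder : ∀ i j, dotProduct (L i) (R' j) + dotProduct (L' i) (R j) = 0)
    (hdiag : ∀ j, dotProduct (L j) (R' j) = 0) :
    (Matrix.of fun (p : Fin n × Fin 2) (r : Fin n ⊕ Fin n) =>
        if p.2 = (0 : Fin 2) then Sum.elim (L p.1) (L' p.1) r
        else lam' p.1 * Sum.elim (0 : Fin n → ℂ) (L p.1) r) *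
      (Matrix.of fun (r : Fin n ⊕ Fin n) (p : Fin n × Fin 2) =>
        if p.2 = (0 : Fin 2) then Sum.elim (R p.1) (0 : Fin n → ℂ) r
        else (lam' p.1)⁻¹ * Sum.elim (R' p.1) (R p.1) r) =
      (1 : Matrix (Fin n × Fin 2) (Fin n × Fin 2) ℂ) := by
  ext ⟨i, a⟩ ⟨j, b⟩
  simp only [mul_apply, of_apply, Fintype.sum_sum_type, Sum.elim_inl, Sum.elim_inr,
    one_apply, Prod.mk.injEq]
  have hd := hder i j
  have hb := hbi i j
  simp only [dotProduct] at hd hb hdiag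
  fin_cases a <;> fin_cases b <;>
    simp only [if_true, if_false, Fin.isValue, ite_true, ite_false, Pi.zero_apply,
      mul_zero, zero_mul, Finset.sum_const_zero, add_zero, zero_add, reduceCtorEq,
      Fin.mk_one, Fin.zero_eq_one_iff, Fin.one_eq_zero_iff, and_false, and_true,
      Fin.ext_iff, Fin.val_zero, Fin.val_one, zero_ne_one, one_ne_zero,
      show ((1:Fin 2) ≠ 0) from by decide, show ((0:Fin 2) = 0) from rfl] <;>
    try simp [hb]
  · simp [Fin.val_eq_val]
  · have : ∑ x : Fin n, L i x * ((lam' j)⁻¹ * R' j x) + ∑ x : Fin n, L' i x * ((lam' j)⁻¹ * R j x)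
        = (lam' j)⁻¹ * (∑ k, L i k * R' j k + ∑ k, L' i k * R j k) := by
      simp only [mul_add, Finset.mul_sum]
      congr 1 <;> exact Finset.sum_congr rfl fun k _ => by ring
    rw [this, hd, mul_zero]
  · have : ∑ x : Fin n, lam' i * L i x * ((lam' j)⁻¹ * R j x)
        = lam' i * (lam' j)⁻¹ * ∑ k, L i k * R j k := by
      rw [Finset.mul_sum]; exact Finset.sum_congr rfl fun k _ => by ring
    rw [this, hb]
    rcases eq_or_ne i j with h | h
    · subst h; simp [mul_inv_cancel₀ (hlam' i)]
    · simp [h, Fin.val_eq_val]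
end

section
/- Let A be an n×n complex matrix with pairwise distinct eigenvalues λ_j and right eigenvectors R_j, and suppose λ'_j, R'_j, D satisfy the differentiated eigen-equation (A − λ_j)·R'_j + D·R_j = λ'_j·R_j with λ'_j ≠ 0 for all j. Then the 2n vectors (R_j, 0) and (1/λ'_j)·(R'_j, R_j), j = 1..n, put B = [[A, D],[0, A]] into Jordan form: B·X = X·J where J is block diagonal with 2×2 Jordan blocks [[λ_j, 1],[0, λ_j]]. -/
/-!
Column by column, `B * X = X * J` says that `(R j, 0)` and `(lam' j)⁻¹ • (R' j, R j)` form a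
Jordan chain of `B = [[A, D], [0, A]]` for `lam j`. The first vector is an eigenvector because
the lower-left block of `B` vanishes; the second is sent to `lam j` times itself plus the first
by the differentiated eigen-equation divided by `lam' j`.
-/

open Matrix

theorem mul_blockDiagonal_jordan_apply {R m ι : Type*} [CommRing R] [Fintype ι] [DecidableEq ι]
    (X : Matrix m (Fin 2 × ι) R) (μ : ι → R) (r : m) (k : Fin 2) (j : ι) :
    (X * blockDiagonal fun j => !![μ j, 1; 0, μ j]) r (k, j) =
      if k = 0 then μ j * X r (0, j) else X r (0, j) + μ j * X r (1, j) := by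
  rw [mul_apply, Fintype.sum_prod_type, Fin.sum_univ_two]
  fin_cases k <;> simp [blockDiagonal_apply, mul_comm]

theorem mul_eq_mul_blockDiagonal_jordan {R m ι : Type*} [CommRing R] [Fintype m] [Fintype ι]
    [DecidableEq ι] (B : Matrix m m R) (X : Matrix m (Fin 2 × ι) R) (μ : ι → R)
    (h₀ : ∀ j, B *ᵥ Xᵀ (0, j) = μ j • Xᵀ (0, j))
    (h₁ : ∀ j, B *ᵥ Xᵀ (1, j) = Xᵀ (0, j) + μ j • Xᵀ (1, j)) :
    B * X = X * blockDiagonal fun j => !![μ j, 1; 0, μ j] := by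
  ext r ⟨k, j⟩
  rw [mul_blockDiagonal_jordan_apply]
  change (B *ᵥ Xᵀ (k, j)) r = _
  fin_cases k
  · simp [h₀]
  · simp [h₁]

theorem fromBlocks_zero_mulVec_sumElim {R l m : Type*} [NonUnitalNonAssocSemiring R] [Fintype l]
    [Fintype m] (A : Matrix l l R) (B : Matrix l m R) (C : Matrix m m R) (u : l → R)
    (v : m → R) :
    fromBlocks A B 0 C *ᵥ Sum.elim u v = Sum.elim (A *ᵥ u + B *ᵥ v) (C *ᵥ v) := by
  simp [fromBlocks_mulVec]

section

variable {K m : Type*} [Field K] [Fintype m] (A D : Matrix m m K) {μ : K} {v : m → K}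

theorem fromBlocks_mulVec_sumElim_zero (hv : A *ᵥ v = μ • v) :
    fromBlocks A D 0 A *ᵥ Sum.elim v 0 = μ • Sum.elim v 0 := by
  rw [fromBlocks_zero_mulVec_sumElim, hv]
  ext (i | i) <;> simp

theorem fromBlocks_mulVec_smul_sumElim {ν : K} {w : m → K} (hv : A *ᵥ v = μ • v)
    (hw : A *ᵥ w + D *ᵥ v = μ • w + ν • v) (hν : ν ≠ 0) :
    fromBlocks A D 0 A *ᵥ (ν⁻¹ • Sum.elim w v) =
      Sum.elim v 0 + μ • (ν⁻¹ • Sum.elim w v) := by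
  rw [mulVec_smul, fromBlocks_zero_mulVec_sumElim, hw, hv]
  ext (i | i) <;>
    simp only [Pi.smul_apply, Pi.add_apply, Pi.zero_apply, Sum.elim_inl, Sum.elim_inr, smul_eq_mul]
  · linear_combination v i * mul_inv_cancel₀ hν
  · ring

end

theorem block_matrix_jordan_form_general (n : ℕ) (A D : Matrix (Fin n) (Fin n) ℂ)
    (lam : Fin n → ℂ)
    (R R' : Fin n → Fin n → ℂ) (lam' : Fin n → ℂ)
    (hR : ∀ j, A.mulVec (R j) = lam j • R j)
    (hlam' : ∀ j, lam' j ≠ 0)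
    (hR' : ∀ j, A.mulVec (R' j) + D.mulVec (R j) = lam j • R' j + lam' j • R j) :
    Matrix.fromBlocks A D 0 A *
        (Matrix.of fun (r : Fin n ⊕ Fin n) (p : Fin 2 × Fin n) =>
          if p.1 = 0 then Sum.elim (R p.2) 0 r
          else (lam' p.2)⁻¹ * Sum.elim (R' p.2) (R p.2) r) =
      (Matrix.of fun (r : Fin n ⊕ Fin n) (p : Fin 2 × Fin n) =>
          if p.1 = 0 then Sum.elim (R p.2) 0 r
          else (lam' p.2)⁻¹ * Sum.elim (R' p.2) (R p.2) r) *
        Matrix.blockDiagonal (fun j => !![lam j, 1; 0, lam j]) := by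
  apply mul_eq_mul_blockDiagonal_jordan
  · exact fun j => fromBlocks_mulVec_sumElim_zero A D (hR j)
  · exact fun j => fromBlocks_mulVec_smul_sumElim A D (hR j) (hR' j) (hlam' j)

theorem block_matrix_jordan_form (n : ℕ) (A D : Matrix (Fin n) (Fin n) ℂ)
    (lam : Fin n → ℂ) (hlam : Function.Injective lam)
    (R R' : Fin n → Fin n → ℂ) (lam' : Fin n → ℂ)
    (hR : ∀ j, A.mulVec (R j) = lam j • R j)
    (hlam' : ∀ j, lam' j ≠ 0)
    (hR' : ∀ j, A.mulVec (R' j) + D.mulVec (R j) = lam j • R' j + lam' j • R j) :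
    Matrix.fromBlocks A D 0 A *
        (Matrix.of fun (r : Fin n ⊕ Fin n) (p : Fin 2 × Fin n) =>
          if p.1 = 0 then Sum.elim (R p.2) 0 r
          else (lam' p.2)⁻¹ * Sum.elim (R' p.2) (R p.2) r) =
      (Matrix.of fun (r : Fin n ⊕ Fin n) (p : Fin 2 × Fin n) =>
          if p.1 = 0 then Sum.elim (R p.2) 0 r
          else (lam' p.2)⁻¹ * Sum.elim (R' p.2) (R p.2) r) *
        Matrix.blockDiagonal (fun j => !![lam j, 1; 0, lam j]) :=
  block_matrix_jordan_form_general n A D lam R R' lam' hR hlam' hR'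
end
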